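/- Let 𝒯 be a set of transpositions of Sym(n), n ≥ 3, whose transposition generating graph G(𝒯) is connected and has m edges. Then the Cayley graph Cay(Sym(n),𝒯) is maximally connected: its vertex connectivity equals m, its common vertex degree. -/

import Mathlib

/-!
The Cayley graph of `Sym(n)` on a set `T` of transpositions is `|T|`-regular and
vertex-transitive, it is connected because a connected `G(T)` makes `T` generate `Sym(n)`, and
the sign is a proper 2-colouring, so it is triangle-free; moreover `|T|` is the number of edges
of `G(T)`. Such a graph has connectivity equal to its degree `d`, by Mader's atom argument.
Let `κ` be the least size of the boundary `N(A)` of a vertex set `A` with vertices outside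
`A ∪ N(A)`; fragments are the `A` attaining `κ`, atoms the smallest fragments. Submodularity of
`|N(·)|` shows that an atom meeting a fragment lies inside it. If `κ < d`, a fragment contains
two adjacent vertices, whose `2d` neighbours are distinct and lie in `A ∪ N(A)`, so fragments
have more than `κ` vertices; yet an automorphism moving a vertex of an atom onto a boundary
vertex carries the atom into its own boundary.
-/

/-- The transposition generating graph `G(𝒯)` of a set `T` of transpositions of `Sym(n)`:
vertices `{1,…,n}` (modeled as `Fin n`), with an edge `i j` iff the transposition
`(i j)` belongs to `T`. -/
def transGraph {n : ℕ} (T : Set (Equiv.Perm (Fin n))) : SimpleGraph (Fin n) :=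
  SimpleGraph.fromRel (fun i j => Equiv.swap i j ∈ T)

/-- The Cayley graph `Cay(Sym(n), T)`: vertices are permutations, and `g, h` are
adjacent iff `h = g * t` for some `t ∈ T`. -/
def cayley {n : ℕ} (T : Set (Equiv.Perm (Fin n))) : SimpleGraph (Equiv.Perm (Fin n)) :=
  SimpleGraph.fromRel (fun g h => ∃ t ∈ T, h = g * t)

/-- `G` is a `k`-tree: there is a construction ordering of the vertices in which the
first `k+1` vertices are mutually adjacent, and each later vertex is joined to exactly
`k` mutually adjacent earlier vertices. -/
def IsKTree (k : ℕ) {V : Type*} [Fintype V] (G : SimpleGraph V) : Prop :=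
  k + 1 ≤ Fintype.card V ∧
  ∃ e : Fin (Fintype.card V) ≃ V,
    (∀ i j : Fin (Fintype.card V), j < i → (i : ℕ) ≤ k → G.Adj (e i) (e j)) ∧
    ∀ i : Fin (Fintype.card V), k + 1 ≤ (i : ℕ) →
      {j : Fin (Fintype.card V) | j < i ∧ G.Adj (e i) (e j)}.ncard = k ∧
      {j : Fin (Fintype.card V) | j < i ∧ G.Adj (e i) (e j)}.Pairwise
        (fun j₁ j₂ => G.Adj (e j₁) (e j₂))

/-- `F` is an `R_k`-vertex-cut of `G`: `G - F` is disconnected and every vertex of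
`G - F` has at least `k` neighbors in `G - F`. -/
def IsRkCut {V : Type*} (G : SimpleGraph V) (k : ℕ) (F : Set V) : Prop :=
  ¬ (G.induce (Fᶜ : Set V)).Connected ∧
  ∀ v : V, v ∉ F → k ≤ {u : V | u ∉ F ∧ G.Adj v u}.ncard

/-- The `R_k`-vertex-connectivity `κ^k(G)`: the minimum cardinality of an
`R_k`-vertex-cut of `G`. -/
noncomputable def rkConn {V : Type*} (G : SimpleGraph V) (k : ℕ) : ℕ :=
  sInf {m : ℕ | ∃ F : Set V, IsRkCut G k F ∧ F.ncard = m}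

/-- The vertex connectivity of a graph: the minimum cardinality of a set of vertices
whose deletion disconnects the graph or reduces it to fewer than two vertices. -/
noncomputable def vertexConn {V : Type*} (G : SimpleGraph V) : ℕ :=
  sInf {m : ℕ | ∃ S : Set V, S.ncard = m ∧
    (¬ (G.induce (Sᶜ : Set V)).Connected ∨ (Sᶜ : Set V).ncard < 2)}

open Finset

namespace SimpleGraph

section Basic

variable {V : Type*} {G : SimpleGraph V}

lemma disjoint_neighborFinset_of_adj [G.LocallyFinite] (h3 : G.CliqueFree 3) {u v : V}
    (huv : G.Adj u v) : Disjoint (G.neighborFinset u) (G.neighborFinset v) := by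
  refine Finset.disjoint_left.2 fun w hwu hwv => ?_
  rw [mem_neighborFinset] at hwu hwv
  exact isIndepSet_neighborSet_of_triangleFree G h3 w hwu.symm hwv.symm huv.ne huv

lemma not_connected_induce_compl_neighborSet {v w : V} (hvw : v ≠ w) (hadj : ¬ G.Adj v w) :
    ¬ (G.induce (G.neighborSet v)ᶜ).Connected := by
  intro hc
  obtain ⟨p⟩ := hc.preconnected ⟨v, G.irrefl⟩ ⟨w, hadj⟩
  obtain ⟨⟨⟨x, y⟩, hxy⟩, -, hx, -⟩ := p.exists_boundary_dart {⟨v, G.irrefl⟩} rfl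
    (fun h => hvw (congrArg Subtype.val h).symm)
  rw [Set.mem_singleton_iff] at hx
  subst hx
  exact y.2 hxy

lemma vertexConn_le_degree (v : V) [Fintype (G.neighborSet v)] :
    vertexConn G ≤ G.degree v := by
  refine Nat.sInf_le ⟨G.neighborSet v, ?_, ?_⟩
  · rw [← card_neighborSet_eq_degree, ← Nat.card_eq_fintype_card, Nat.card_coe_set_eq]
  by_cases h : ∃ w, w ≠ v ∧ ¬ G.Adj v w
  · obtain ⟨w, hwv, hvw⟩ := h
    exact Or.inl (not_connected_induce_compl_neighborSet hwv.symm hvw)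
  · simp only [not_exists, not_and, not_not] at h
    have hcompl : (G.neighborSet v)ᶜ = {v} := by
      ext w
      simp only [Set.mem_compl_iff, mem_neighborSet, Set.mem_singleton_iff]
      exact ⟨fun hw => by_contra fun hwv => hw (h w hwv), fun hw => hw ▸ G.irrefl⟩
    right
    rw [hcompl, Set.ncard_singleton]
    norm_num

end Basic

section Fragments

variable {V : Type*} [Fintype V] [DecidableEq V] (G : SimpleGraph V) [DecidableRel G.Adj]

def extNbhd (A : Finset V) : Finset V := {v | v ∉ A ∧ ∃ a ∈ A, G.Adj v a}

def exterior (A : Finset V) : Finset V := (A ∪ G.extNbhd A)ᶜ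

def IsSeparating (A : Finset V) : Prop := A.Nonempty ∧ (G.exterior A).Nonempty

noncomputable def separationNumber : ℕ :=
  sInf ((fun A => #(G.extNbhd A)) '' {A | G.IsSeparating A})

def IsFragment (A : Finset V) : Prop :=
  G.IsSeparating A ∧ #(G.extNbhd A) = G.separationNumber

noncomputable def atomCard : ℕ := sInf (card '' {A | G.IsFragment A})

def IsAtom (A : Finset V) : Prop := G.IsFragment A ∧ #A = G.atomCard

variable {G} {A B C X Y : Finset V} {v : V}

@[simp]
lemma mem_extNbhd : v ∈ G.extNbhd A ↔ v ∉ A ∧ ∃ a ∈ A, G.Adj v a := by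
  simp [extNbhd]

@[simp]
lemma mem_exterior : v ∈ G.exterior A ↔ v ∉ A ∧ v ∉ G.extNbhd A := by
  simp [exterior]

lemma disjoint_extNbhd : Disjoint A (G.extNbhd A) :=
  Finset.disjoint_left.2 fun _ hv hv' => (mem_extNbhd.1 hv').1 hv

lemma disjoint_exterior : Disjoint A (G.exterior A) :=
  Finset.disjoint_left.2 fun _ hv hv' => (mem_exterior.1 hv').1 hv

lemma disjoint_extNbhd_exterior : Disjoint (G.extNbhd A) (G.exterior A) :=
  Finset.disjoint_left.2 fun _ hv hv' => (mem_exterior.1 hv').2 hv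

lemma subset_extNbhd_of_disjoint (hCA : Disjoint C A) (hCext : Disjoint C (G.exterior A)) :
    C ⊆ G.extNbhd A := fun v hv => by
  by_contra hvN
  exact Finset.disjoint_left.1 hCext hv
    (mem_exterior.2 ⟨Finset.disjoint_left.1 hCA hv, hvN⟩)

lemma card_inter_add_card_inter_extNbhd_add_card_inter_exterior (S A : Finset V) :
    #(S ∩ A) + #(S ∩ G.extNbhd A) + #(S ∩ G.exterior A) = #S := by
  rw [← card_union_of_disjoint (disjoint_extNbhd.mono inf_le_right inf_le_right),
    ← inter_union_distrib_left, exterior, ← sdiff_eq_inter_compl, card_inter_add_card_sdiff]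

lemma neighborFinset_subset_union_extNbhd (hv : v ∈ A) :
    G.neighborFinset v ⊆ A ∪ G.extNbhd A := by
  intro u hu
  rw [mem_neighborFinset] at hu
  by_cases h : u ∈ A
  · exact mem_union_left _ h
  · exact mem_union_right _ (mem_extNbhd.2 ⟨h, v, hv, hu.symm⟩)

lemma extNbhd_exterior_subset : G.extNbhd (G.exterior A) ⊆ G.extNbhd A := by
  intro v hv
  obtain ⟨hv, u, hu, huv⟩ := mem_extNbhd.1 hv
  simp only [mem_exterior, not_and, not_not] at hv hu
  by_contra hvN
  have hvA : v ∈ A := by_contra fun h => hvN (hv h)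
  exact hu.2 (mem_extNbhd.2 ⟨hu.1, v, hvA, huv.symm⟩)

lemma subset_exterior_exterior : A ⊆ G.exterior (G.exterior A) := fun _ hv =>
  mem_exterior.2 ⟨Finset.disjoint_left.1 disjoint_exterior hv,
    fun h => Finset.disjoint_left.1 disjoint_extNbhd hv (extNbhd_exterior_subset h)⟩

lemma extNbhd_inter_subset : G.extNbhd (X ∩ Y) ⊆
    X ∩ G.extNbhd Y ∪ G.extNbhd X ∩ Y ∪ G.extNbhd X ∩ G.extNbhd Y := by
  intro v hv
  obtain ⟨hvXY, u, hu, huv⟩ := mem_extNbhd.1 hv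
  rw [mem_inter] at hu hvXY
  have hX : v ∈ X ∨ v ∈ G.extNbhd X :=
    or_iff_not_imp_left.2 fun h => mem_extNbhd.2 ⟨h, u, hu.1, huv⟩
  have hY : v ∈ Y ∨ v ∈ G.extNbhd Y :=
    or_iff_not_imp_left.2 fun h => mem_extNbhd.2 ⟨h, u, hu.2, huv⟩
  simp only [mem_union, mem_inter]
  tauto

lemma card_extNbhd_inter_le : #(G.extNbhd (X ∩ Y)) ≤
    #(X ∩ G.extNbhd Y) + #(G.extNbhd X ∩ Y) + #(G.extNbhd X ∩ G.extNbhd Y) :=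
  (card_le_card extNbhd_inter_subset).trans <|
    (card_union_le _ _).trans (Nat.add_le_add_right (card_union_le _ _) _)

lemma exterior_inter_subset : G.exterior X ∩ G.exterior Y ⊆ G.exterior (X ∩ Y) := by
  intro v hv
  simp only [mem_inter, mem_exterior] at hv
  refine mem_exterior.2 ⟨fun h => hv.1.1 (mem_inter.1 h).1, fun h => ?_⟩
  rcases mem_union.1 (extNbhd_inter_subset h) with h | h <;>
    simp only [mem_union, mem_inter] at h <;> tauto

lemma separationNumber_le (hA : G.IsSeparating A) : G.separationNumber ≤ #(G.extNbhd A) :=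
  Nat.sInf_le ⟨A, hA, rfl⟩

lemma IsSeparating.exists_isFragment (hA : G.IsSeparating A) : ∃ B, G.IsFragment B := by
  obtain ⟨B, hB, hcard⟩ :
      G.separationNumber ∈ (fun A => #(G.extNbhd A)) '' {A | G.IsSeparating A} :=
    Nat.sInf_mem ⟨_, A, hA, rfl⟩
  exact ⟨B, hB, hcard⟩

lemma IsFragment.atomCard_le (hA : G.IsFragment A) : G.atomCard ≤ #A :=
  Nat.sInf_le ⟨A, hA, rfl⟩

lemma IsFragment.exists_isAtom (hA : G.IsFragment A) : ∃ B, G.IsAtom B := by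
  obtain ⟨B, hB, hcard⟩ : G.atomCard ∈ card '' {A | G.IsFragment A} :=
    Nat.sInf_mem ⟨_, A, hA, rfl⟩
  exact ⟨B, hB, hcard⟩

lemma IsFragment.extNbhd_exterior (hA : G.IsFragment A) :
    G.extNbhd (G.exterior A) = G.extNbhd A := by
  refine eq_of_subset_of_card_le extNbhd_exterior_subset ?_
  rw [hA.2]
  exact separationNumber_le ⟨hA.1.2, hA.1.1.mono subset_exterior_exterior⟩

lemma IsFragment.exterior_exterior (hA : G.IsFragment A) : G.exterior (G.exterior A) = A := by
  ext v
  rw [exterior, hA.extNbhd_exterior]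
  have hdisj : v ∈ A → v ∉ G.extNbhd A := fun h => Finset.disjoint_left.1 disjoint_extNbhd h
  simp only [mem_compl, mem_union, mem_exterior]
  tauto

lemma IsFragment.exterior (hA : G.IsFragment A) : G.IsFragment (G.exterior A) :=
  ⟨⟨hA.1.2, by rw [hA.exterior_exterior]; exact hA.1.1⟩, by rw [hA.extNbhd_exterior, hA.2]⟩

-- Applied to `X, Y` and to their exteriors, `card_extNbhd_inter_le` gives two bounds whose
-- right-hand sides add up to `#extNbhd X + #extNbhd Y = 2 κ`, so both are equalities.
lemma IsFragment.inter (hX : G.IsFragment X) (hY : G.IsFragment Y) (hXY : (X ∩ Y).Nonempty)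
    (hext : (G.exterior X ∩ G.exterior Y).Nonempty) : G.IsFragment (X ∩ Y) := by
  have hsep : G.IsSeparating (X ∩ Y) := ⟨hXY, hext.mono exterior_inter_subset⟩
  have hsep' : G.IsSeparating (G.exterior X ∩ G.exterior Y) := by
    refine ⟨hext, hXY.mono ?_⟩
    simpa only [hX.exterior_exterior, hY.exterior_exterior] using
      exterior_inter_subset (G := G) (X := G.exterior X) (Y := G.exterior Y)
  have hcorner := card_extNbhd_inter_le (G := G) (X := X) (Y := Y)
  have hcorner' := (separationNumber_le hsep').trans (card_extNbhd_inter_le (G := G))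
  rw [hX.extNbhd_exterior, hY.extNbhd_exterior] at hcorner'
  have hX_split :=
    card_inter_add_card_inter_extNbhd_add_card_inter_exterior (G := G) (G.extNbhd X) Y
  have hY_split :=
    card_inter_add_card_inter_extNbhd_add_card_inter_exterior (G := G) (G.extNbhd Y) X
  rw [inter_comm _ X, inter_comm (G.extNbhd Y), inter_comm (G.extNbhd Y)] at hY_split
  refine ⟨hsep, le_antisymm ?_ (separationNumber_le hsep)⟩
  have := hX.2
  have := hY.2
  omega

lemma IsAtom.subset_of_isFragment (hbig : ∀ C, G.IsFragment C → G.separationNumber < #C)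
    (hA : G.IsAtom A) (hB : G.IsFragment B) (hAB : (A ∩ B).Nonempty) : A ⊆ B := by
  have subset_of_isFragment_inter {C : Finset V} (hC : G.IsFragment (A ∩ C)) : A ⊆ C := by
    rw [← inter_eq_left]
    by_contra hne
    have := card_lt_card (inter_subset_left.ssubset_of_ne hne)
    have := hC.atomCard_le
    have := hA.2
    omega
  have not_subset_extNbhd {C D : Finset V} (hC : G.IsFragment C) (hD : G.IsFragment D) :
      ¬ C ⊆ G.extNbhd D := fun h =>
    (hbig C hC).not_ge ((card_le_card h).trans_eq hD.2)
  by_cases hext : Disjoint (G.exterior A) (G.exterior B)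
  · by_cases hAB' : Disjoint A (G.exterior B)
    · exact absurd (subset_extNbhd_of_disjoint hAB'.symm hext.symm)
        (not_subset_extNbhd hB.exterior hA.1)
    by_cases hBA : Disjoint (G.exterior A) B
    · exact absurd (subset_extNbhd_of_disjoint hBA hext) (not_subset_extNbhd hA.1.exterior hB)
    have hsub := subset_of_isFragment_inter <| hA.1.inter hB.exterior
      (not_disjoint_iff_nonempty_inter.1 hAB')
      (by rw [hB.exterior_exterior]; exact not_disjoint_iff_nonempty_inter.1 hBA)
    obtain ⟨v, hv⟩ := hAB
    rw [mem_inter] at hv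
    exact absurd (hsub hv.1) (Finset.disjoint_left.1 disjoint_exterior hv.2)
  · exact subset_of_isFragment_inter (hA.1.inter hB hAB (not_disjoint_iff_nonempty_inter.1 hext))

lemma two_mul_le_card_add_card_extNbhd {d : ℕ} (hreg : G.IsRegularOfDegree d)
    (h3 : G.CliqueFree 3) (hA : A.Nonempty) (hlt : #(G.extNbhd A) < d) :
    2 * d ≤ #A + #(G.extNbhd A) := by
  obtain ⟨v, hv⟩ := hA
  obtain ⟨u, huv, huN⟩ := exists_mem_notMem_of_card_lt_card
    (hlt.trans_eq (hreg.degree_eq v).symm)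
  have hu : u ∈ A := (mem_union.1 (neighborFinset_subset_union_extNbhd hv huv)).resolve_right huN
  rw [mem_neighborFinset] at huv
  calc 2 * d = #(G.neighborFinset u ∪ G.neighborFinset v) := by
        rw [card_union_of_disjoint (disjoint_neighborFinset_of_adj h3 huv.symm),
          card_neighborFinset_eq_degree, card_neighborFinset_eq_degree, hreg.degree_eq,
          hreg.degree_eq, two_mul]
    _ ≤ #(A ∪ G.extNbhd A) := card_le_card <|
        union_subset (neighborFinset_subset_union_extNbhd hu)
          (neighborFinset_subset_union_extNbhd hv)
    _ = #A + #(G.extNbhd A) := card_union_of_disjoint disjoint_extNbhd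

lemma IsFragment.separationNumber_lt_card {d : ℕ} (hreg : G.IsRegularOfDegree d)
    (h3 : G.CliqueFree 3) (hlt : G.separationNumber < d) (hA : G.IsFragment A) :
    G.separationNumber < #A := by
  have := two_mul_le_card_add_card_extNbhd hreg h3 hA.1.1 (hA.2 ▸ hlt)
  have := hA.2
  omega

section Iso

variable {W : Type*} [Fintype W] [DecidableEq W] {H : SimpleGraph W} [DecidableRel H.Adj]

lemma extNbhd_image (φ : G ≃g H) (A : Finset V) :
    H.extNbhd (A.image φ) = (G.extNbhd A).image φ := by
  ext w
  obtain ⟨v, rfl⟩ := φ.surjective w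
  simp [φ.injective.eq_iff, φ.map_adj_iff]

lemma exterior_image (φ : G ≃g H) (A : Finset V) :
    H.exterior (A.image φ) = (G.exterior A).image φ := by
  ext w
  obtain ⟨v, rfl⟩ := φ.surjective w
  simp [φ.injective.eq_iff, extNbhd_image]

end Iso

lemma IsAtom.image (φ : G ≃g G) (hA : G.IsAtom A) : G.IsAtom (A.image φ) := by
  have hcard := card_image_of_injective A φ.injective
  refine ⟨⟨⟨hA.1.1.1.image φ, ?_⟩, ?_⟩, hcard.trans hA.2⟩
  · rw [exterior_image]
    exact hA.1.1.2.image φ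
  · rw [extNbhd_image, card_image_of_injective _ φ.injective, hA.1.2]

lemma IsSeparating.extNbhd_nonempty (hc : G.Connected) (hA : G.IsSeparating A) :
    (G.extNbhd A).Nonempty := by
  obtain ⟨a, ha⟩ := hA.1
  obtain ⟨b, hb⟩ := hA.2
  obtain ⟨p⟩ := hc.preconnected a b
  obtain ⟨⟨⟨x, y⟩, hxy⟩, -, hx, hy⟩ := p.exists_boundary_dart A ha (mem_exterior.1 hb).1
  exact ⟨y, mem_extNbhd.2 ⟨hy, x, hx, hxy.symm⟩⟩

theorem IsSeparating.le_card_extNbhd {d : ℕ} (hc : G.Connected)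
    (htrans : ∀ u v : V, ∃ φ : G ≃g G, φ u = v) (hreg : G.IsRegularOfDegree d)
    (h3 : G.CliqueFree 3) (hA : G.IsSeparating A) : d ≤ #(G.extNbhd A) := by
  by_contra! hAd
  have hlt : G.separationNumber < d := (separationNumber_le hA).trans_lt hAd
  have hbig C (hC : G.IsFragment C) := hC.separationNumber_lt_card hreg h3 hlt
  obtain ⟨B, hB⟩ := hA.exists_isFragment
  obtain ⟨B, hB⟩ := hB.exists_isAtom
  obtain ⟨v, hv⟩ := hB.1.1.extNbhd_nonempty hc
  obtain ⟨b, hb⟩ := hB.1.1.1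
  obtain ⟨φ, rfl⟩ := htrans b v
  have disjoint_of_notMem {C : Finset V} (hC : G.IsFragment C) (hvC : φ b ∉ C) :
      Disjoint (B.image φ) C := by
    by_contra h
    exact hvC ((hB.image φ).subset_of_isFragment hbig hC
      (not_disjoint_iff_nonempty_inter.1 h) (mem_image_of_mem φ hb))
  have hsub : B.image φ ⊆ G.extNbhd B := subset_extNbhd_of_disjoint
    (disjoint_of_notMem hB.1 (mem_extNbhd.1 hv).1)
    (disjoint_of_notMem hB.1.exterior (Finset.disjoint_left.1 disjoint_extNbhd_exterior hv))
  refine (hbig B hB.1).not_ge ?_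
  calc #B = #(B.image φ) := (card_image_of_injective B φ.injective).symm
    _ ≤ #(G.extNbhd B) := card_le_card hsub
    _ = G.separationNumber := hB.1.2

lemma exists_isSeparating_extNbhd_subset {S : Set V} (hS : ¬ (G.induce Sᶜ).Preconnected) :
    ∃ A, G.IsSeparating A ∧ ↑(G.extNbhd A) ⊆ S := by
  simp only [Preconnected, not_forall] at hS
  obtain ⟨x, y, hxy⟩ := hS
  classical
  let A : Finset V := {z | ∃ hz : z ∈ Sᶜ, (G.induce Sᶜ).Reachable x ⟨z, hz⟩}
  have hAS : ↑(G.extNbhd A) ⊆ S := by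
    intro v hv
    obtain ⟨hvA, u, hu, huv⟩ := mem_extNbhd.1 (mem_coe.1 hv)
    obtain ⟨hu, hxu⟩ := (mem_filter.1 hu).2
    by_contra hvS
    have huv' : (G.induce Sᶜ).Adj ⟨u, hu⟩ ⟨v, hvS⟩ := huv.symm
    exact hvA (mem_filter.2 ⟨mem_univ v, hvS, hxu.trans huv'.reachable⟩)
  have hxA : ↑x ∈ A := mem_filter.2 ⟨mem_univ _, x.2, Reachable.refl _⟩
  have hyA : ↑y ∉ A := fun hy => by
    obtain ⟨_, hxy'⟩ := (mem_filter.1 hy).2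
    exact hxy hxy'
  exact ⟨A, ⟨⟨x, hxA⟩, y, mem_exterior.2 ⟨hyA, fun hy => y.2 (hAS hy)⟩⟩, hAS⟩

lemma le_vertexConn {d : ℕ} (hd : d < Fintype.card V)
    (h : ∀ A, G.IsSeparating A → d ≤ #(G.extNbhd A)) : d ≤ vertexConn G := by
  refine le_csInf ⟨_, Set.univ, rfl, Or.inr (by simp)⟩ ?_
  rintro k ⟨S, rfl, hS | hS⟩
  · rcases Sᶜ.eq_empty_or_nonempty with hSc | hSc
    · rw [Set.compl_empty_iff.1 hSc, Set.ncard_univ, Nat.card_eq_fintype_card]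
      exact hd.le
    · have : Nonempty ↥Sᶜ := hSc.to_subtype
      obtain ⟨A, hA, hAS⟩ := exists_isSeparating_extNbhd_subset fun hp => hS ⟨hp⟩
      calc d ≤ #(G.extNbhd A) := h A hA
        _ = (↑(G.extNbhd A) : Set V).ncard := (Set.ncard_coe_finset _).symm
        _ ≤ S.ncard := Set.ncard_le_ncard hAS
  · have := Set.ncard_add_ncard_compl S
    rw [Nat.card_eq_fintype_card] at this
    omega

theorem Connected.vertexConn_eq {d : ℕ} (hc : G.Connected)
    (htrans : ∀ u v : V, ∃ φ : G ≃g G, φ u = v) (hreg : G.IsRegularOfDegree d)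
    (h3 : G.CliqueFree 3) : vertexConn G = d := by
  obtain ⟨v⟩ := hc.nonempty
  refine le_antisymm ((vertexConn_le_degree v).trans_eq (hreg v)) ?_
  exact le_vertexConn ((hreg v).symm.trans_lt (G.degree_lt_card_verts v))
    fun A hA => hA.le_card_extNbhd hc htrans hreg h3

end Fragments

section MulCayley

variable {M : Type*} [Group M] {s : Set M}

lemma mulCayley_adj_iff_inv_mul_mem (hs : ∀ t ∈ s, t⁻¹ ∈ s) (hs₁ : (1 : M) ∉ s)
    {u v : M} : (mulCayley s).Adj u v ↔ u⁻¹ * v ∈ s := by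
  rw [mulCayley_adj]
  refine ⟨fun ⟨_, h⟩ => h.elim id fun h => by simpa using hs _ h,
    fun h => ⟨?_, Or.inl h⟩⟩
  rintro rfl
  exact hs₁ (by simpa using h)

lemma exists_iso_mulCayley_apply_eq (u v : M) :
    ∃ φ : mulCayley s ≃g mulCayley s, φ u = v :=
  ⟨⟨Equiv.mulLeft (v * u⁻¹), mulCayley_adj_mul_iff_right⟩, by simp⟩

lemma mulCayley_connected_of_closure_eq_top (hs : Subgroup.closure s = ⊤) :
    (mulCayley s).Connected := by
  have reach (g : M) : (mulCayley s).Reachable 1 g := by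
    induction hs ▸ Subgroup.mem_top g using Subgroup.closure_induction_right with
    | one => rfl
    | mul_right x _ y hy ih =>
      refine ih.trans ?_
      by_cases hxy : x = x * y
      · rw [← hxy]
      · exact ((mulCayley_adj' s _ _).2 ⟨hxy, y, hy, Or.inl rfl⟩).reachable
    | mul_inv_cancel x _ y hy ih =>
      refine ih.trans ?_
      by_cases hxy : x = x * y⁻¹
      · rw [← hxy]
      · exact ((mulCayley_adj' s _ _).2 ⟨hxy, y, hy, Or.inr (by group)⟩).reachable
  exact (connected_iff_exists_forall_reachable _).2 ⟨1, reach⟩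

lemma isRegularOfDegree_mulCayley (hs : ∀ t ∈ s, t⁻¹ ∈ s) (hs₁ : (1 : M) ∉ s)
    [(mulCayley s).LocallyFinite] : (mulCayley s).IsRegularOfDegree s.ncard := fun u => by
  have hnbhd : (mulCayley s).neighborSet u = (u * ·) '' s := by
    ext v
    simp [mulCayley_adj_iff_inv_mul_mem hs hs₁]
  rw [← card_neighborSet_eq_degree, ← Nat.card_eq_fintype_card, Nat.card_coe_set_eq, hnbhd,
    Set.ncard_image_of_injective _ (mul_right_injective u)]

end MulCayley

end SimpleGraph

open Equiv Equiv.Perm SimpleGraph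

def signColoring {α : Type*} [Fintype α] [DecidableEq α] {s : Set (Perm α)}
    (hs : ∀ t ∈ s, sign t = -1) : (mulCayley s).Coloring ℤˣ :=
  Coloring.mk sign fun {u v} huv => by
    obtain ⟨-, t, ht, rfl | rfl⟩ := (mulCayley_adj' s u v).1 huv <;> simp [hs t ht]

lemma mulCayley_cliqueFree_three {α : Type*} [Fintype α] [DecidableEq α] {s : Set (Perm α)}
    (hs : ∀ t ∈ s, sign t = -1) : (mulCayley s).CliqueFree 3 :=
  (signColoring hs).colorable.cliqueFree (by simp)

lemma mem_sym2_iff_swap_apply_ne {α : Type*} [DecidableEq α] {i j x : α} (hij : i ≠ j) :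
    x ∈ s(i, j) ↔ swap i j x ≠ x := by
  rw [swap_apply_ne_self_iff, Sym2.mem_iff]
  exact (and_iff_right hij).symm

section TransGraph

variable {n : ℕ} {T : Set (Perm (Fin n))}

lemma transGraph_adj {i j : Fin n} : (transGraph T).Adj i j ↔ i ≠ j ∧ swap i j ∈ T := by
  rw [transGraph, fromRel_adj, swap_comm j i, or_self]

lemma cayley_eq_mulCayley : cayley T = mulCayley T := by
  ext u v
  simp only [cayley, mulCayley, fromRel_adj, eq_comm]

lemma closure_eq_top_of_transGraph_connected (hT : ∀ t ∈ T, t.IsSwap)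
    (hconn : (transGraph T).Connected) : Subgroup.closure T = ⊤ := by
  have : MulAction.IsPretransitive (Subgroup.closure T) (Fin n) := by
    refine ⟨fun i j => ?_⟩
    obtain ⟨p⟩ := hconn.preconnected i j
    induction p with
    | nil => exact ⟨1, one_smul _ _⟩
    | @cons i k j hik _ ih =>
      obtain ⟨g, hg⟩ := ih
      refine ⟨g * ⟨swap i k, Subgroup.subset_closure (transGraph_adj.1 hik).2⟩, ?_⟩
      rw [mul_smul, ← hg]
      simp
  exact closure_of_isSwap_of_isPretransitive hT

lemma ncard_edgeSet_transGraph (hT : ∀ t ∈ T, t.IsSwap) :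
    (transGraph T).edgeSet.ncard = T.ncard := by
  let f : Sym2 (Fin n) → Perm (Fin n) := Sym2.lift ⟨swap, swap_comm⟩
  have himage : f '' (transGraph T).edgeSet = T := by
    ext t
    constructor
    · rintro ⟨e, he, rfl⟩
      induction e using Sym2.ind with
      | _ i j => exact (transGraph_adj.1 he).2
    · intro ht
      obtain ⟨i, j, hij, rfl⟩ := hT t ht
      exact ⟨s(i, j), transGraph_adj.2 ⟨hij, ht⟩, rfl⟩
  have hinj : Set.InjOn f (transGraph T).edgeSet := by
    intro e he e' he' hee'
    induction e using Sym2.ind with | _ i j =>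
    induction e' using Sym2.ind with | _ k l =>
    refine Sym2.ext fun x => ?_
    rw [mem_sym2_iff_swap_apply_ne (transGraph_adj.1 he).1,
      mem_sym2_iff_swap_apply_ne (transGraph_adj.1 he').1]
    exact Iff.of_eq (congrArg (· x ≠ x) hee')
  rw [← hinj.ncard_image, himage]

end TransGraph

theorem stmt18_general (n m : ℕ)
    (T : Set (Equiv.Perm (Fin n))) (hT : ∀ t ∈ T, Equiv.Perm.IsSwap t)
    (hconn : (transGraph T).Connected)
    (hm : (transGraph T).edgeSet.ncard = m) :
    vertexConn (cayley T) = m := by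
  classical
  have hT_inv : ∀ t ∈ T, t⁻¹ ∈ T := fun t ht => by
    obtain ⟨i, j, -, rfl⟩ := hT t ht
    rwa [swap_inv]
  have hT_one : (1 : Perm (Fin n)) ∉ T := fun h => (hT 1 h).isCycle.ne_one rfl
  rw [← hm, ncard_edgeSet_transGraph hT, cayley_eq_mulCayley]
  exact (mulCayley_connected_of_closure_eq_top
    (closure_eq_top_of_transGraph_connected hT hconn)).vertexConn_eq
    exists_iso_mulCayley_apply_eq (isRegularOfDegree_mulCayley hT_inv hT_one)
    (mulCayley_cliqueFree_three fun t ht => (hT t ht).sign_eq)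

/-- For `n ≥ 3` and a set `𝒯` of transpositions of `Sym(n)` whose generating graph is
connected with `m` edges, the Cayley graph `Cay(Sym(n), 𝒯)` is maximally connected:
its vertex connectivity equals `m`, its common vertex degree. -/
theorem stmt18 (n m : ℕ) (hn : 3 ≤ n)
    (T : Set (Equiv.Perm (Fin n))) (hT : ∀ t ∈ T, Equiv.Perm.IsSwap t)
    (hconn : (transGraph T).Connected)
    (hm : (transGraph T).edgeSet.ncard = m) :
    vertexConn (cayley T) = m :=
  stmt18_general n m T hT hconn hm
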